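/- Reduction to the worst case q = ∞ (general case): let Γ ∈ (0,1], let g : [0,∞) → [0,1] be nondecreasing with 1 − g(0) ≤ Γ, and let ℓ ≥ 0. If ∫_0^ℓ e^{−θ} g(θ) dθ + ∫_0^∞ e^{−θ} ( θ(1 − g(ℓ)) − ∫_{min{θ,ℓ}}^ℓ (1 − g(z)) dz )^+ dθ ≥ Γ, then for every q ≥ 0: ∫_0^ℓ e^{−θ} g(θ) dθ + ∫_0^∞ e^{−θ} ( min{q, θ}(1 − g(ℓ)) − ∫_{min{θ,ℓ}}^ℓ (1 − g(z)) dz )^+ dθ ≥ Γ · (1 − e^{−q}). -/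

import Mathlib

open MeasureTheory Real Set Filter

/-! With `c = 1 - g ℓ ∈ [0, Γ]` and `H θ = ∫_{min θ ℓ}^ℓ (1 - g)`, capping `θ` at `q` lowers
`(θ c - H θ)⁺` by at most `c (θ - q)⁺ ≤ Γ (θ - q)⁺`, and `∫ e^{-θ} (θ - q)⁺ dθ = e^{-q}`.
So the `q`-integral is at least the `q = ∞` integral minus `Γ e^{-q}`. -/

lemma hasDerivAt_neg_sub_add_one_mul_exp_neg (a x : ℝ) :
    HasDerivAt (fun y => -((y - a + 1) * exp (-y))) (exp (-x) * (x - a)) x := by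
  have hexp : HasDerivAt (fun y : ℝ => exp (-y)) (-exp (-x)) x := by
    simpa using (hasDerivAt_neg x).exp
  refine (((hasDerivAt_id x).sub_const a).add_const 1 |>.mul hexp).neg.congr_deriv ?_
  simp only [id]
  ring

lemma tendsto_neg_sub_add_one_mul_exp_neg_atTop (a : ℝ) :
    Tendsto (fun y => -((y - a + 1) * exp (-y))) atTop (nhds 0) := by
  have h := ((tendsto_pow_mul_exp_neg_atTop_nhds_zero 1).add
    (tendsto_exp_neg_atTop_nhds_zero.const_mul (1 - a))).neg
  simp only [pow_one, mul_zero, add_zero, neg_zero] at h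
  exact h.congr fun y => by ring

lemma exp_neg_mul_sub_nonneg_of_mem_Ioi {a x : ℝ} (hx : x ∈ Ioi a) : 0 ≤ exp (-x) * (x - a) :=
  mul_nonneg (exp_pos _).le (sub_nonneg.2 (le_of_lt hx))

lemma integrableOn_Ioi_exp_neg_mul_sub (a : ℝ) :
    IntegrableOn (fun x => exp (-x) * (x - a)) (Ioi a) :=
  integrableOn_Ioi_deriv_of_nonneg' (fun x _ => hasDerivAt_neg_sub_add_one_mul_exp_neg a x)
    (fun _ => exp_neg_mul_sub_nonneg_of_mem_Ioi) (tendsto_neg_sub_add_one_mul_exp_neg_atTop a)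

lemma integral_Ioi_exp_neg_mul_sub (a : ℝ) : ∫ x in Ioi a, exp (-x) * (x - a) = exp (-a) := by
  rw [integral_Ioi_of_hasDerivAt_of_nonneg' (fun x _ => hasDerivAt_neg_sub_add_one_mul_exp_neg a x)
    (fun _ => exp_neg_mul_sub_nonneg_of_mem_Ioi) (tendsto_neg_sub_add_one_mul_exp_neg_atTop a)]
  ring

lemma exp_neg_mul_max_sub_eq_indicator (q : ℝ) :
    (fun θ => exp (-θ) * max (θ - q) 0) = (Ioi q).indicator (fun θ => exp (-θ) * (θ - q)) := by
  ext θ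
  by_cases hθ : q < θ
  · simp [indicator_of_mem (mem_Ioi.2 hθ), max_eq_left (sub_nonneg.2 hθ.le)]
  · simp [indicator_of_notMem (mt mem_Ioi.1 hθ), max_eq_right (sub_nonpos.2 (not_lt.1 hθ))]

lemma integrable_exp_neg_mul_max_sub (q : ℝ) :
    Integrable (fun θ => exp (-θ) * max (θ - q) 0) := by
  rw [exp_neg_mul_max_sub_eq_indicator, integrable_indicator_iff measurableSet_Ioi]
  exact integrableOn_Ioi_exp_neg_mul_sub q

lemma integral_exp_neg_mul_max_sub (q : ℝ) :
    ∫ θ, exp (-θ) * max (θ - q) 0 = exp (-q) := by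
  rw [exp_neg_mul_max_sub_eq_indicator, integral_indicator measurableSet_Ioi,
    integral_Ioi_exp_neg_mul_sub]

lemma setIntegral_exp_neg_mul_max_sub_le (s : Set ℝ) (q : ℝ) :
    ∫ θ in s, exp (-θ) * max (θ - q) 0 ≤ exp (-q) :=
  integral_exp_neg_mul_max_sub q ▸ setIntegral_le_integral (integrable_exp_neg_mul_max_sub q)
    (Eventually.of_forall fun _ => mul_nonneg (exp_pos _).le (le_max_right _ _))

lemma integrableOn_Ioi_exp_neg_mul_of_abs_le {f : ℝ → ℝ}
    (hf : AEStronglyMeasurable f (volume.restrict (Ioi 0))) (hbound : ∀ θ ∈ Ioi 0, |f θ| ≤ θ) :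
    IntegrableOn (fun θ => exp (-θ) * f θ) (Ioi 0) := by
  refine Integrable.mono' (integrableOn_Ioi_exp_neg_mul_sub 0)
    ((continuous_exp.comp continuous_neg).aestronglyMeasurable.mul hf) ?_
  filter_upwards [ae_restrict_mem measurableSet_Ioi] with θ hθ
  rw [norm_mul, norm_of_nonneg (exp_pos _).le, sub_zero]
  exact mul_le_mul_of_nonneg_left (hbound θ hθ) (exp_pos _).le

lemma max_mul_sub_le_max_min_mul_sub_add {c Γ : ℝ} (hc : 0 ≤ c) (hcΓ : c ≤ Γ) (θ q H : ℝ) :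
    max (θ * c - H) 0 ≤ max (min q θ * c - H) 0 + Γ * max (θ - q) 0 := by
  rcases le_total q θ with hqθ | hθq
  · rw [min_eq_left hqθ, max_eq_left (sub_nonneg.2 hqθ)]
    refine max_le ?_ (by nlinarith [le_max_right (q * c - H) 0])
    nlinarith [le_max_left (q * c - H) 0]
  · rw [min_eq_right hθq, max_eq_right (sub_nonpos.2 hθq)]
    simp

section IntegralFromMin

variable {f : ℝ → ℝ} {ℓ : ℝ}

lemma integral_min_nonneg (hf : ∀ z ∈ Ici 0, 0 ≤ f z) (hℓ : 0 ≤ ℓ) {θ : ℝ} (hθ : 0 ≤ θ) :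
    0 ≤ ∫ z in min θ ℓ..ℓ, f z :=
  intervalIntegral.integral_nonneg (min_le_right θ ℓ) fun z hz => hf z (le_trans (le_min hθ hℓ) hz.1)

lemma antitoneOn_integral_min (hf : ∀ z ∈ Ici 0, 0 ≤ f z) (hfi : IntervalIntegrable f volume 0 ℓ)
    (hℓ : 0 ≤ ℓ) : AntitoneOn (fun θ => ∫ z in min θ ℓ..ℓ, f z) (Ici 0) := by
  intro θ₁ hθ₁ θ₂ _ h12
  have hm₁ : 0 ≤ min θ₁ ℓ := le_min hθ₁ hℓ
  refine intervalIntegral.integral_mono_interval (min_le_min_right ℓ h12) (min_le_right θ₂ ℓ)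
    le_rfl ?_ (hfi.mono_set ?_)
  · filter_upwards [ae_restrict_mem measurableSet_Ioc] with z hz
    exact hf z (hm₁.trans hz.1.le)
  · exact uIcc_subset_uIcc (mem_uIcc_of_le hm₁ (min_le_right θ₁ ℓ)) right_mem_uIcc

lemma integrableOn_exp_neg_mul_max_sub_integral_min {t : ℝ → ℝ} {c : ℝ} (hc₀ : 0 ≤ c)
    (hc₁ : c ≤ 1) (ht : Measurable t) (htθ : ∀ θ, t θ ≤ θ) (hf : ∀ z ∈ Ici 0, 0 ≤ f z)
    (hfi : IntervalIntegrable f volume 0 ℓ) (hℓ : 0 ≤ ℓ) :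
    IntegrableOn (fun θ => exp (-θ) * max (t θ * c - ∫ z in min θ ℓ..ℓ, f z) 0) (Ioi 0) := by
  refine integrableOn_Ioi_exp_neg_mul_of_abs_le
    (((ht.mul_const c).aemeasurable.sub (aemeasurable_restrict_of_antitoneOn measurableSet_Ioi
      ((antitoneOn_integral_min hf hfi hℓ).mono Ioi_subset_Ici_self))).max
        aemeasurable_const).aestronglyMeasurable fun θ hθ => ?_
  have hθ₀ : 0 ≤ θ := le_of_lt hθ
  rw [abs_of_nonneg (le_max_right _ _)]
  refine max_le ?_ hθ₀
  nlinarith [mul_le_mul_of_nonneg_right (htθ θ) hc₀, integral_min_nonneg hf hℓ hθ₀]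

end IntegralFromMin

theorem worst_case_q_infty_general_general
    (Γ : ℝ)
    (g : ℝ → ℝ) (hg : MonotoneOn g (Set.Ici 0))
    (hrange : ∀ x ∈ Set.Ici (0 : ℝ), g x ∈ Set.Icc (0 : ℝ) 1)
    (hg0 : 1 - g 0 ≤ Γ) (ℓ : ℝ) (hℓ : 0 ≤ ℓ)
    (hq_infty : (∫ θ in (0 : ℝ)..ℓ, Real.exp (-θ) * g θ)
        + (∫ θ in Set.Ioi (0 : ℝ), Real.exp (-θ) *
            max (θ * (1 - g ℓ) - ∫ z in min θ ℓ..ℓ, (1 - g z)) 0) ≥ Γ) :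
    ∀ q ≥ (0 : ℝ),
      (∫ θ in (0 : ℝ)..ℓ, Real.exp (-θ) * g θ)
        + (∫ θ in Set.Ioi (0 : ℝ), Real.exp (-θ) *
            max (min q θ * (1 - g ℓ) - ∫ z in min θ ℓ..ℓ, (1 - g z)) 0)
      ≥ Γ * (1 - Real.exp (-q)) := by
  intro q _
  have hℓ' : ℓ ∈ Ici (0 : ℝ) := hℓ
  have hΓ : 0 ≤ Γ := by linarith [(hrange 0 self_mem_Ici).2]
  have hc₀ : 0 ≤ 1 - g ℓ := sub_nonneg.2 (hrange ℓ hℓ').2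
  have hc₁ : 1 - g ℓ ≤ 1 := by linarith [(hrange ℓ hℓ').1]
  have hc : 1 - g ℓ ≤ Γ := by linarith [hg self_mem_Ici hℓ' hℓ]
  have hdeficit : ∀ z ∈ Ici (0 : ℝ), 0 ≤ 1 - g z := fun z hz => sub_nonneg.2 (hrange z hz).2
  have hgi : IntervalIntegrable (fun z => 1 - g z) volume 0 ℓ := intervalIntegrable_const.sub
    (hg.mono (by simp [uIcc_of_le hℓ, Icc_subset_Ici_self])).intervalIntegrable
  have hint_infty := integrableOn_exp_neg_mul_max_sub_integral_min (t := fun θ => θ)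
    hc₀ hc₁ measurable_id (fun _ => le_rfl) hdeficit hgi hℓ
  have hint_q := integrableOn_exp_neg_mul_max_sub_integral_min (t := fun θ => min q θ)
    hc₀ hc₁ (measurable_const.min measurable_id) (min_le_right q) hdeficit hgi hℓ
  have htail : IntegrableOn (fun θ => Γ * (exp (-θ) * max (θ - q) 0)) (Ioi 0) :=
    (integrable_exp_neg_mul_max_sub q).integrableOn.const_mul Γ
  have hmono := setIntegral_mono_on hint_infty (hint_q.add htail) measurableSet_Ioi fun θ _ =>
    calc exp (-θ) * max (θ * (1 - g ℓ) - ∫ z in min θ ℓ..ℓ, (1 - g z)) 0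
        ≤ exp (-θ) * (max (min q θ * (1 - g ℓ) - ∫ z in min θ ℓ..ℓ, (1 - g z)) 0
            + Γ * max (θ - q) 0) := by
          gcongr
          exact max_mul_sub_le_max_min_mul_sub_add hc₀ hc θ q _
      _ = exp (-θ) * max (min q θ * (1 - g ℓ) - ∫ z in min θ ℓ..ℓ, (1 - g z)) 0
            + Γ * (exp (-θ) * max (θ - q) 0) := by ring
  simp only [Pi.add_apply] at hmono
  rw [integral_add hint_q htail, integral_const_mul] at hmono
  have htail_le := mul_le_mul_of_nonneg_left (setIntegral_exp_neg_mul_max_sub_le (Ioi 0) q) hΓ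
  linarith

/-- Reduction to the worst case `q = ∞` in the general-probability analysis of
Stochastic Balance. -/
theorem worst_case_q_infty_general
    (Γ : ℝ) (hΓ : Γ ∈ Set.Ioc (0 : ℝ) 1)
    (g : ℝ → ℝ) (hg : MonotoneOn g (Set.Ici 0))
    (hrange : ∀ x ∈ Set.Ici (0 : ℝ), g x ∈ Set.Icc (0 : ℝ) 1)
    (hg0 : 1 - g 0 ≤ Γ) (ℓ : ℝ) (hℓ : 0 ≤ ℓ)
    (hq_infty : (∫ θ in (0 : ℝ)..ℓ, Real.exp (-θ) * g θ)
        + (∫ θ in Set.Ioi (0 : ℝ), Real.exp (-θ) *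
            max (θ * (1 - g ℓ) - ∫ z in min θ ℓ..ℓ, (1 - g z)) 0) ≥ Γ) :
    ∀ q ≥ (0 : ℝ),
      (∫ θ in (0 : ℝ)..ℓ, Real.exp (-θ) * g θ)
        + (∫ θ in Set.Ioi (0 : ℝ), Real.exp (-θ) *
            max (min q θ * (1 - g ℓ) - ∫ z in min θ ℓ..ℓ, (1 - g z)) 0)
      ≥ Γ * (1 - Real.exp (-q)) :=
  worst_case_q_infty_general_general Γ g hg hrange hg0 ℓ hℓ hq_infty
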